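/- Let (U, ≤) be a meet-semilattice, S = {s₁,…,sₙ} a finite meet-closed subset with s₁,…,sₙ ordered so that s_j ≤ s_i implies j ≤ i, and g : U → ℝ. Let E be the n×n matrix with E_{ij} = 1 if s_j ≤ s_i and 0 otherwise, and D the diagonal matrix with entries Ψ(s_i), where Ψ(s_j) = g(s_j) − ∑_{s_i < s_j} Ψ(s_i). Then (g(s_i ⊓ s_j)) = E D Eᵀ and E is unitriangular. -/

import Mathlib

/-!
Write `ζ` for the zeta matrix `ζ i j = [s j ≤ s i]`. Then
`(ζ * diagonal Ψ * ζᵀ) i j = ∑_{s l ≤ s i, s l ≤ s j} Ψ l = ∑_{s l ≤ s i ⊓ s j} Ψ l`,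
and the recursion defining `Ψ` says exactly that `g (s k) = ∑_{s l ≤ s k} Ψ l`. Meet-closedness
provides `k` with `s k = s i ⊓ s j`, so both sides agree. Triangularity of `ζ` is the
compatibility of the enumeration with the order, which also makes `s` injective.
-/

open Finset Matrix

namespace MeetMatrix

variable {ι α R : Type*}

open scoped Classical in
noncomputable def zetaMatrix (R : Type*) [Zero R] [One R] [LE α] (s : ι → α) : Matrix ι ι R :=
  Matrix.of fun i j => if s j ≤ s i then 1 else 0

section Triangular

variable [Zero R] [One R]

theorem zetaMatrix_apply_self [Preorder α] (s : ι → α) (i : ι) : zetaMatrix R s i i = 1 := by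
  simp [zetaMatrix]

theorem zetaMatrix_apply_eq_zero_of_lt [Preorder α] [Preorder ι] {s : ι → α}
    (hs : ∀ i j, s j ≤ s i → j ≤ i) {i j : ι} (hij : i < j) : zetaMatrix R s i j = 0 := by
  rw [zetaMatrix, of_apply, if_neg fun h => (hij.trans_le (hs i j h)).false]

end Triangular

theorem injective_of_le_imp_le [Preorder α] [PartialOrder ι] {s : ι → α}
    (hs : ∀ i j, s j ≤ s i → j ≤ i) : Function.Injective s :=
  fun i j h => le_antisymm (hs j i h.le) (hs i j h.ge)

open scoped Classical in
theorem sum_filter_le_eq_add_sum_filter_lt [Fintype ι] [PartialOrder α] [AddCommMonoid R]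
    {s : ι → α} (hs : Function.Injective s) (f : ι → R) (j : ι) :
    ∑ k with s k ≤ s j, f k = f j + ∑ k with s k < s j, f k := by
  have hsplit : univ.filter (fun k => s k ≤ s j) = insert j (univ.filter fun k => s k < s j) := by
    ext k
    simp only [mem_filter, mem_univ, true_and, mem_insert, le_iff_lt_or_eq, hs.eq_iff]
    tauto
  rw [hsplit, sum_insert (by simp)]

open scoped Classical in
theorem zetaMatrix_mul_diagonal_mul_transpose_apply [Fintype ι] [DecidableEq ι]
    [SemilatticeInf α] [NonAssocSemiring R] (s : ι → α) (d : ι → R) (i j : ι) :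
    (zetaMatrix R s * diagonal d * (zetaMatrix R s)ᵀ) i j = ∑ l with s l ≤ s i ⊓ s j, d l := by
  rw [mul_apply, sum_filter]
  refine sum_congr rfl fun l _ => ?_
  simp only [mul_diagonal, transpose_apply, zetaMatrix, of_apply, le_inf_iff]
  split_ifs <;> simp_all

end MeetMatrix

open MeetMatrix in
open scoped Classical in
theorem meet_matrix_structure_general {U : Type*} [SemilatticeInf U]
    (n : ℕ) (s : Fin n → U)
    (hmc : ∀ i j, ∃ k, s k = s i ⊓ s j)
    (hord : ∀ i j, s j ≤ s i → j ≤ i)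
    (g : U → ℝ) (Psi : Fin n → ℝ)
    (hPsi : ∀ j, Psi j = g (s j)
      - ∑ i ∈ Finset.univ.filter (fun i => s i < s j), Psi i)
    (E : Matrix (Fin n) (Fin n) ℝ)
    (hE : ∀ i j, E i j = if s j ≤ s i then 1 else 0) :
    (Matrix.of fun i j : Fin n => g (s i ⊓ s j))
        = E * Matrix.diagonal Psi * E.transpose ∧
    (∀ i, E i i = 1) ∧ (∀ i j : Fin n, i < j → E i j = 0) := by
  obtain rfl : E = zetaMatrix ℝ s := Matrix.ext hE
  have hg : ∀ k, g (s k) = ∑ l with s l ≤ s k, Psi l := fun k => by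
    rw [sum_filter_le_eq_add_sum_filter_lt (injective_of_le_imp_le hord), hPsi k, sub_add_cancel]
  refine ⟨?_, zetaMatrix_apply_self s, fun i j => zetaMatrix_apply_eq_zero_of_lt hord⟩
  ext i j
  obtain ⟨k, hk⟩ := hmc i j
  rw [of_apply, zetaMatrix_mul_diagonal_mul_transpose_apply, ← hk, hg]

open scoped Classical in
theorem meet_matrix_structure {U : Type*} [SemilatticeInf U]
    (n : ℕ) (s : Fin n → U) (hsinj : Function.Injective s)
    (hmc : ∀ i j, ∃ k, s k = s i ⊓ s j)
    (hord : ∀ i j, s j ≤ s i → j ≤ i)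
    (g : U → ℝ) (Psi : Fin n → ℝ)
    (hPsi : ∀ j, Psi j = g (s j)
      - ∑ i ∈ Finset.univ.filter (fun i => s i < s j), Psi i)
    (E : Matrix (Fin n) (Fin n) ℝ)
    (hE : ∀ i j, E i j = if s j ≤ s i then 1 else 0) :
    (Matrix.of fun i j : Fin n => g (s i ⊓ s j))
        = E * Matrix.diagonal Psi * E.transpose ∧
    (∀ i, E i i = 1) ∧ (∀ i j : Fin n, i < j → E i j = 0) :=
  meet_matrix_structure_general n s hmc hord g Psi hPsi E hE
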